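/- arXiv:2603.20396 — 3 statements merged into one kernel-verified Lean document; each statement's English description precedes it below -/
import Mathlib

section
/- Let M ⊆ A_n be a macro set with |M ∩ B_G(r)| ≤ c(log(e + r))^q for all r ≥ 0, where c, q > 0 are constants, and suppose B_G(r) ⊆ B_{G'}(s) for some integers r, s ≥ 1. Then the number of elements of B_G(r) is bounded by the number of words of length at most s over the alphabet G ∪ (M ∩ B_G(r)); concretely, C(r+n, n) ≤ (s+1) · ((n + c)(log(e + r))^q)^s, and hence r^n / n! ≤ (s+1)(n+c)^s (log(e+r))^{qs}. -/
open scoped ENNReal BigOperators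

/-- The length of an element of the free abelian monoid `A_n = ℕ^n` with respect to the
standard generators `G = {a_1, …, a_n}`: the sum of its coordinates. -/
def glen {n : ℕ} (w : Fin n → ℕ) : ℕ := ∑ j, w j

/-- The standard generating set `G` of `A_n = ℕ^n`: the standard basis vectors. -/
def gens (n : ℕ) : Set (Fin n → ℕ) := {w | ∃ i : Fin n, w = fun t => if t = i then 1 else 0}

/-- The length of `w` with respect to a generating set `S`: the minimum number of elements
of `S` (with repetition) summing to `w`; `⊤` if `w` is not representable. -/
noncomputable def slen {n : ℕ} (S : Set (Fin n → ℕ)) (w : Fin n → ℕ) : ℕ∞ :=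
  sInf {k : ℕ∞ | ∃ l : Multiset (Fin n → ℕ), (∀ x ∈ l, x ∈ S) ∧ l.sum = w ∧ (l.card : ℕ∞) = k}

/-- The expansion function `f_{G'}(s) = sup { r ∈ ℕ : B_G(r) ⊆ B_{G'}(s) }`, valued in
`ℝ≥0∞` (so that `⊤` means the ball inclusion holds for every radius `r`). -/
noncomputable def expansion {n : ℕ} (S : Set (Fin n → ℕ)) (s : ℕ) : ℝ≥0∞ :=
  sSup {x : ℝ≥0∞ | ∃ r : ℕ, x = (r : ℝ≥0∞) ∧ ∀ w : Fin n → ℕ, glen w ≤ r → slen S w ≤ (s : ℕ∞)}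

/-!
Since `G`-length is additive, a `G'`-word of length `≤ s` representing an element of `B_G(r)`
only uses letters from the alphabet `G ∪ (M ∩ B_G(r))`, which has at most
`n + c (log (e + r))^q` elements. There are at most `(s + 1) · |alphabet|^s` such words, whereas
`|B_G(r)| ≥ C(r + n, n)` by stars and bars.
-/

open Finset

section BoundedSums

variable {α : Type*} [AddCommMonoid α] [DecidableEq α]

def boundedSums (A : Finset α) (s : ℕ) : Finset α :=
  (range (s + 1)).biUnion fun k => (Fintype.piFinset fun _ : Fin k => A).image fun g => ∑ i, g i

lemma Multiset.sum_mem_boundedSums {A : Finset α} {s : ℕ} {l : Multiset α}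
    (hlA : ∀ x ∈ l, x ∈ A) (hls : Multiset.card l ≤ s) : l.sum ∈ boundedSums A s := by
  refine mem_biUnion.2 ⟨l.toList.length, ?_, mem_image.2 ⟨l.toList.get, ?_, ?_⟩⟩
  · simpa [Nat.lt_succ_iff] using hls
  · exact Fintype.mem_piFinset.2 fun i => hlA _ (Multiset.mem_toList.1 (l.toList.get_mem i))
  · rw [← List.sum_ofFn, List.ofFn_get, Multiset.sum_toList]

lemma card_boundedSums_le {A : Finset α} (hA : A.Nonempty) (s : ℕ) :
    (boundedSums A s).card ≤ (s + 1) * A.card ^ s :=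
  calc (boundedSums A s).card ≤ ∑ k ∈ range (s + 1), A.card ^ k := by
        refine card_biUnion_le.trans (sum_le_sum fun k _ => card_image_le.trans ?_)
        simp [Fintype.card_piFinset]
    _ ≤ ∑ _k ∈ range (s + 1), A.card ^ s :=
        sum_le_sum fun _k hk =>
          Nat.pow_le_pow_right hA.card_pos (Nat.le_of_lt_succ (mem_range.1 hk))
    _ = (s + 1) * A.card ^ s := by simp

end BoundedSums

lemma eq_of_init_eq_of_sum_eq {n : ℕ} {P Q : Fin (n + 1) → ℕ} (hinit : Fin.init P = Fin.init Q)
    (hsum : ∑ i, P i = ∑ i, Q i) : P = Q := by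
  have hlast : P (Fin.last n) = Q (Fin.last n) := by
    simp only [Fin.sum_univ_castSucc] at hsum
    have : ∑ i : Fin n, P i.castSucc = ∑ i : Fin n, Q i.castSucc := congrArg (∑ i, · i) hinit
    omega
  rw [← Fin.snoc_init_self P, ← Fin.snoc_init_self Q, hinit, hlast]

def gball (n r : ℕ) : Finset (Fin n → ℕ) :=
  (Fintype.piFinset fun _ => range (r + 1)).filter fun w => glen w ≤ r

@[simp]
lemma mem_gball {n r : ℕ} {w : Fin n → ℕ} : w ∈ gball n r ↔ glen w ≤ r := by
  simp only [gball, mem_filter, Fintype.mem_piFinset, mem_range, and_iff_right_iff_imp]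
  exact fun h j =>
    Nat.lt_succ_of_le ((single_le_sum (fun _ _ => Nat.zero_le _) (mem_univ j)).trans h)

lemma choose_le_card_gball (n r : ℕ) : (r + n).choose n ≤ (gball n r).card := by
  have hsym : (r + n).choose n = Fintype.card (Sym (Fin (n + 1)) r) := by
    rw [Sym.card_sym_eq_choose, Fintype.card_fin, show n + 1 + r - 1 = r + n by omega,
      Nat.choose_symm_add]
  rw [hsym, ← card_univ]
  -- a multiset of size `r` on `n + 1` letters is determined by the multiplicities of the first `n`
  let P := fun m : Sym (Fin (n + 1)) r => (Sym.equivNatSumOfFintype _ _ m : Fin (n + 1) → ℕ)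
  refine card_le_card_of_injOn (fun m => Fin.init (P m)) (fun m _ => ?_) (fun m₁ _ m₂ _ h => ?_)
  · refine mem_gball.2 (le_of_le_of_eq ?_ (Sym.equivNatSumOfFintype _ _ m).2)
    rw [Fin.sum_univ_castSucc]
    exact Nat.le_add_right _ _
  · exact (Sym.equivNatSumOfFintype _ _).injective <| Subtype.ext <|
      eq_of_init_eq_of_sum_eq h (by rw [(Sym.equivNatSumOfFintype _ _ m₁).2,
        (Sym.equivNatSumOfFintype _ _ m₂).2])

lemma exists_multiset_of_slen_le {n : ℕ} {S : Set (Fin n → ℕ)} {w : Fin n → ℕ} {s : ℕ}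
    (h : slen S w ≤ s) :
    ∃ l : Multiset (Fin n → ℕ), (∀ x ∈ l, x ∈ S) ∧ l.sum = w ∧ Multiset.card l ≤ s := by
  have hne : {k : ℕ∞ | ∃ l : Multiset (Fin n → ℕ),
      (∀ x ∈ l, x ∈ S) ∧ l.sum = w ∧ (l.card : ℕ∞) = k}.Nonempty := by
    by_contra hempty
    rw [Set.not_nonempty_iff_eq_empty] at hempty
    simp [slen, hempty] at h
  obtain ⟨l, hlS, hlw, hl⟩ := csInf_mem hne
  exact ⟨l, hlS, hlw, by exact_mod_cast hl.trans_le h⟩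

open scoped Classical in
noncomputable def alphabet (n r : ℕ) (M : Set (Fin n → ℕ)) : Finset (Fin n → ℕ) :=
  univ.image (fun i : Fin n => fun t => if t = i then 1 else 0) ∪ (gball n r).filter (· ∈ M)

lemma alphabet_nonempty {n : ℕ} (hn : 0 < n) (r : ℕ) (M : Set (Fin n → ℕ)) :
    (alphabet n r M).Nonempty :=
  ⟨_, mem_union_left _ (mem_image_of_mem _ (mem_univ ⟨0, hn⟩))⟩

lemma card_alphabet_le (n r : ℕ) (M : Set (Fin n → ℕ)) :
    (alphabet n r M).card ≤ n + (M ∩ {w | glen w ≤ r}).ncard := by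
  classical
  refine (card_union_le _ _).trans (add_le_add (card_image_le.trans_eq (by simp)) ?_)
  rw [← Set.ncard_coe_finset]
  exact le_of_eq (congrArg Set.ncard (by ext; simp [and_comm]))

lemma gball_subset_boundedSums {n r s : ℕ} {M : Set (Fin n → ℕ)}
    (hball : ∀ w : Fin n → ℕ, glen w ≤ r → slen (gens n ∪ M) w ≤ (s : ℕ∞)) :
    gball n r ⊆ boundedSums (alphabet n r M) s := by
  intro w hw
  obtain ⟨l, hlS, rfl, hls⟩ := exists_multiset_of_slen_le (hball w (mem_gball.1 hw))
  refine Multiset.sum_mem_boundedSums (fun x hx => ?_) hls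
  have hxr : glen x ≤ r :=
    (sum_le_sum fun j _ => Multiset.le_sum_of_mem hx j).trans (mem_gball.1 hw)
  rcases hlS x hx with ⟨i, rfl⟩ | hxM
  · exact mem_union_left _ (mem_image_of_mem _ (mem_univ i))
  · classical
    exact mem_union_right _ (by simpa [alphabet] using ⟨hxr, hxM⟩)

lemma one_le_log_exp_one_add {x : ℝ} (hx : 0 ≤ x) : 1 ≤ Real.log (Real.exp 1 + x) := by
  rw [Real.le_log_iff_exp_le (by positivity)]
  exact le_add_of_nonneg_right hx

lemma pow_div_factorial_le_choose_add {α : Type*} [Semifield α] [LinearOrder α]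
    [IsStrictOrderedRing α] (r n : ℕ) : (r : α) ^ n / n.factorial ≤ (r + n).choose n := by
  refine le_trans ?_ (Nat.pow_le_choose n (r + n))
  rw [show r + n + 1 - n = r + 1 by omega]
  gcongr
  exact_mod_cast Nat.le_succ r

theorem counting_bound_polylog_general
    (n : ℕ) (hn : 1 ≤ n) (c q : ℝ) (hq : 0 < q)
    (M : Set (Fin n → ℕ))
    (hM : ∀ r : ℕ, ((M ∩ {w | glen w ≤ r}).ncard : ℝ)
            ≤ c * (Real.log (Real.exp 1 + r)) ^ q)
    (r s : ℕ)
    (hball : ∀ w : Fin n → ℕ, glen w ≤ r → slen (gens n ∪ M) w ≤ (s : ℕ∞)) :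
    ((r + n).choose n : ℝ)
        ≤ (s + 1 : ℝ) * (((n : ℝ) + c) * (Real.log (Real.exp 1 + r)) ^ q) ^ s ∧
    (r : ℝ) ^ n / (n.factorial : ℝ)
        ≤ (s + 1 : ℝ) * ((n : ℝ) + c) ^ s * (Real.log (Real.exp 1 + r)) ^ (q * s) := by
  set L := Real.log (Real.exp 1 + r)
  have hL : 1 ≤ L := one_le_log_exp_one_add (Nat.cast_nonneg r)
  have hcount : (r + n).choose n ≤ (s + 1) * (alphabet n r M).card ^ s :=
    calc (r + n).choose n ≤ (gball n r).card := choose_le_card_gball n r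
      _ ≤ (boundedSums (alphabet n r M) s).card := card_le_card (gball_subset_boundedSums hball)
      _ ≤ _ := card_boundedSums_le (alphabet_nonempty hn r M) s
  have halphabet : ((alphabet n r M).card : ℝ) ≤ (n + c) * L ^ q :=
    calc ((alphabet n r M).card : ℝ) ≤ n + (M ∩ {w | glen w ≤ r}).ncard := by
          exact_mod_cast card_alphabet_le n r M
      _ ≤ n * L ^ q + c * L ^ q := by
          gcongr
          · exact le_mul_of_one_le_right (Nat.cast_nonneg n) (Real.one_le_rpow hL hq.le)
          · exact hM r
      _ = (n + c) * L ^ q := by ring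
  have hchoose : ((r + n).choose n : ℝ) ≤ (s + 1) * ((n + c) * L ^ q) ^ s :=
    calc ((r + n).choose n : ℝ) ≤ (s + 1) * ((alphabet n r M).card : ℝ) ^ s := by
          exact_mod_cast hcount
      _ ≤ _ := by gcongr
  refine ⟨hchoose, ?_⟩
  calc (r : ℝ) ^ n / n.factorial ≤ (r + n).choose n := pow_div_factorial_le_choose_add r n
    _ ≤ (s + 1) * ((n + c) * L ^ q) ^ s := hchoose
    _ = (s + 1) * (n + c) ^ s * L ^ (q * s) := by
        rw [mul_pow, ← mul_assoc, Real.rpow_mul (zero_le_one.trans hL), Real.rpow_natCast]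

/-- **The counting bound behind the polylog upper bound.**
If `|M ∩ B_G(r)| ≤ c(log(e + r))^q` for all `r ≥ 0` and `B_G(r) ⊆ B_{G'}(s)` for some
integers `r, s ≥ 1`, then `|B_G(r)| = C(r+n, n)` is at most the number of words of length
`≤ s` over `G ∪ (M ∩ B_G(r))`: concretely
`C(r+n, n) ≤ (s+1)·((n + c)(log(e + r))^q)^s`, hence
`r^n/n! ≤ (s+1)(n+c)^s (log(e+r))^{qs}`. -/
theorem counting_bound_polylog
    (n : ℕ) (hn : 1 ≤ n) (c q : ℝ) (hc : 0 < c) (hq : 0 < q)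
    (M : Set (Fin n → ℕ))
    (hM : ∀ r : ℕ, ((M ∩ {w | glen w ≤ r}).ncard : ℝ)
            ≤ c * (Real.log (Real.exp 1 + r)) ^ q)
    (r s : ℕ) (hr : 1 ≤ r) (hs : 1 ≤ s)
    (hball : ∀ w : Fin n → ℕ, glen w ≤ r → slen (gens n ∪ M) w ≤ (s : ℕ∞)) :
    ((r + n).choose n : ℝ)
        ≤ (s + 1 : ℝ) * (((n : ℝ) + c) * (Real.log (Real.exp 1 + r)) ^ q) ^ s ∧
    (r : ℝ) ^ n / (n.factorial : ℝ)
        ≤ (s + 1 : ℝ) * ((n : ℝ) + c) ^ s * (Real.log (Real.exp 1 + r)) ^ (q * s) :=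
  counting_bound_polylog_general n hn c q hq M hM r s hball
end

section
/- Fix an integer k ≥ 2 and let g be a positive integer with the Waring property for exponent k: every nonnegative integer is a sum of at most g k-th powers of positive integers. Let M = { m^k · a_i : 1 ≤ i ≤ n, m ≥ 1 } ⊆ A_n. Then |M ∩ B_G(r)| = n⌊r^{1/k}⌋ ≤ n · r^{1/k} for all r ≥ 1, and every element w ∈ A_n satisfies |w|_{G'} ≤ n·g; consequently f_{G'}(s) = ∞ for all s ≥ n·g. -/
/-!
Write `w = ∑ i, Pi.single i (w i)`. By the Waring property each coordinate `w i` is a sum of at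
most `g` powers `t ^ k` with `t ≥ 1`, so `Pi.single i (w i)` is a sum of at most `g` macros.
Since the word length is subadditive, `|w|_{G'} ≤ n g` for every `w`, and every `G`-ball lies in
the `G'`-ball of radius `n g`. The macros of `G`-length at most `r` are the `Pi.single i (m ^ k)`
with `1 ≤ m ≤ ⌊r^{1/k}⌋`.
-/

open scoped ENNReal BigOperators

open Finset

section WordLength

variable {n : ℕ} {S : Set (Fin n → ℕ)}

lemma slen_le_card {l : Multiset (Fin n → ℕ)} (hl : ∀ x ∈ l, x ∈ S) {w : Fin n → ℕ}
    (hw : l.sum = w) : slen S w ≤ l.card :=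
  sInf_le ⟨l, hl, hw, rfl⟩

lemma slen_zero : slen S 0 = 0 :=
  nonpos_iff_eq_zero.1 <| by simpa using slen_le_card (S := S) (l := 0) (by simp) rfl

lemma exists_multiset_card_eq_slen {w : Fin n → ℕ} (hw : slen S w ≠ ⊤) :
    ∃ l : Multiset (Fin n → ℕ), (∀ x ∈ l, x ∈ S) ∧ l.sum = w ∧ (l.card : ℕ∞) = slen S w := by
  have hne : {k : ℕ∞ | ∃ l : Multiset (Fin n → ℕ), (∀ x ∈ l, x ∈ S) ∧ l.sum = w ∧
      (l.card : ℕ∞) = k}.Nonempty := by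
    contrapose! hw
    rw [slen, hw, sInf_empty]
  exact csInf_mem hne

lemma slen_add_le (v w : Fin n → ℕ) : slen S (v + w) ≤ slen S v + slen S w := by
  rcases eq_or_ne (slen S v) ⊤ with hv | hv
  · simp [hv]
  rcases eq_or_ne (slen S w) ⊤ with hw | hw
  · simp [hw]
  obtain ⟨lv, hlv, rfl, hv⟩ := exists_multiset_card_eq_slen hv
  obtain ⟨lw, hlw, rfl, hw⟩ := exists_multiset_card_eq_slen hw
  rw [← hv, ← hw, ← Nat.cast_add, ← Multiset.card_add, ← Multiset.sum_add]
  exact slen_le_card (by simpa [or_imp, forall_and] using ⟨hlv, hlw⟩) rfl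

lemma slen_sum_le {ι : Type*} (s : Finset ι) (f : ι → Fin n → ℕ) :
    slen S (∑ i ∈ s, f i) ≤ ∑ i ∈ s, slen S (f i) :=
  le_sum_of_subadditive _ slen_zero.le slen_add_le s f

lemma expansion_eq_top {s : ℕ} (h : ∀ w, slen S w ≤ s) : expansion S s = ⊤ := by
  rw [expansion, eq_top_iff, ← ENNReal.iSup_natCast]
  exact iSup_le fun r => le_sSup ⟨r, rfl, fun w _ => h w⟩

end WordLength

def IsWaringBound (k g : ℕ) : Prop :=
  ∀ x : ℕ, ∃ l : Multiset ℕ, l.card ≤ g ∧ (∀ m ∈ l, ∃ t : ℕ, 1 ≤ t ∧ m = t ^ k) ∧ l.sum = x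

def powerMacros (n k : ℕ) : Set (Fin n → ℕ) := {w | ∃ i : Fin n, ∃ m : ℕ, 1 ≤ m ∧ w = Pi.single i (m ^ k)}

section Waring

variable {n k g : ℕ} {S : Set (Fin n → ℕ)}

lemma slen_single_le (hW : IsWaringBound k g) (hS : powerMacros n k ⊆ S) (i : Fin n) (x : ℕ) :
    slen S (Pi.single i x) ≤ g := by
  obtain ⟨l, hcard, hpow, rfl⟩ := hW x
  calc slen S (Pi.single i l.sum) ≤ (l.map (Pi.single i)).card := by
        refine slen_le_card (l := l.map (Pi.single i)) (fun y hy => ?_)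
          (map_multiset_sum (AddMonoidHom.single (fun _ : Fin n => ℕ) i) l).symm
        obtain ⟨m, hm, rfl⟩ := Multiset.mem_map.1 hy
        obtain ⟨t, ht, rfl⟩ := hpow m hm
        exact hS ⟨i, t, ht, rfl⟩
    _ ≤ g := by simpa using hcard

lemma slen_le_mul (hW : IsWaringBound k g) (hS : powerMacros n k ⊆ S) (w : Fin n → ℕ) :
    slen S w ≤ n * g :=
  calc slen S w = slen S (∑ i, Pi.single i (w i)) := by rw [univ_sum_single]
    _ ≤ ∑ i, slen S (Pi.single i (w i)) := slen_sum_le _ _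
    _ ≤ ∑ _i : Fin n, (g : ℕ∞) := sum_le_sum fun i _ => slen_single_le hW hS i (w i)
    _ = n * g := by simp

end Waring

section Counting

variable {n k : ℕ}

lemma pow_le_iff_le_floor_rpow (hk : k ≠ 0) (m r : ℕ) :
    m ^ k ≤ r ↔ m ≤ ⌊(r : ℝ) ^ ((1 : ℝ) / k)⌋₊ := by
  rw [Nat.le_floor_iff (by positivity), one_div,
    Real.le_rpow_inv_iff_of_pos (by positivity) (by positivity) (by positivity), Real.rpow_natCast]
  exact_mod_cast Iff.rfl

lemma glen_single (i : Fin n) (c : ℕ) : glen (Pi.single i c) = c := by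
  simp [glen]

-- Shifting `m` to `m + 1` avoids `Pi.single i 0 = 0`, which would break injectivity.
lemma injective_single_succ_pow (hk : k ≠ 0) :
    Function.Injective fun p : Fin n × ℕ => (Pi.single p.1 ((p.2 + 1) ^ k) : Fin n → ℕ) := by
  rintro ⟨i, m⟩ ⟨j, m'⟩ h
  have hij : i = j := by
    by_contra hij
    simpa [Pi.single_apply, hij, hk] using congrFun h i
  subst hij
  simpa using Nat.pow_left_injective hk (Pi.single_injective i h)

lemma powerMacros_inter_ball (hk : k ≠ 0) (r : ℕ) :
    powerMacros n k ∩ {w | glen w ≤ r} =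
      ((univ ×ˢ range ⌊(r : ℝ) ^ ((1 : ℝ) / k)⌋₊).image
        fun p : Fin n × ℕ => (Pi.single p.1 ((p.2 + 1) ^ k) : Fin n → ℕ) : Finset (Fin n → ℕ)) := by
  ext w
  simp only [powerMacros, Set.mem_inter_iff, Set.mem_ofPred_eq, coe_image, coe_product, coe_univ,
    coe_range, Set.mem_image, Set.mem_prod, Set.mem_univ, Set.mem_Iio, true_and, Prod.exists]
  constructor
  · rintro ⟨⟨i, m, hm, rfl⟩, hr⟩
    refine ⟨i, m - 1, ?_, by rw [Nat.sub_add_cancel hm]⟩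
    rw [glen_single, pow_le_iff_le_floor_rpow hk] at hr
    omega
  · rintro ⟨i, m, hm, rfl⟩
    refine ⟨⟨i, m + 1, by omega, rfl⟩, ?_⟩
    rw [glen_single, pow_le_iff_le_floor_rpow hk]
    omega

lemma ncard_powerMacros_inter_ball (hk : k ≠ 0) (r : ℕ) :
    (powerMacros n k ∩ {w | glen w ≤ r}).ncard = n * ⌊(r : ℝ) ^ ((1 : ℝ) / k)⌋₊ := by
  rw [powerMacros_inter_ball hk, Set.ncard_coe_finset,
    card_image_of_injective _ (injective_single_succ_pow hk), card_product, card_univ,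
    Fintype.card_fin, card_range]

end Counting

theorem waring_macros_infinite_expansion_general
    (n k g : ℕ) (hk : 2 ≤ k)
    (hWaring : ∀ x : ℕ, ∃ l : Multiset ℕ,
      (l.card ≤ g) ∧ (∀ m ∈ l, ∃ t : ℕ, 1 ≤ t ∧ m = t ^ k) ∧ l.sum = x)
    (M : Set (Fin n → ℕ))
    (hM : M = {w | ∃ i : Fin n, ∃ m : ℕ, 1 ≤ m ∧ w = fun t => if t = i then m ^ k else 0}) :
    (∀ r : ℕ, 1 ≤ r →
      (M ∩ {w | glen w ≤ r}).ncard = n * ⌊(r : ℝ) ^ ((1 : ℝ) / (k : ℝ))⌋₊ ∧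
      ((M ∩ {w | glen w ≤ r}).ncard : ℝ) ≤ (n : ℝ) * (r : ℝ) ^ ((1 : ℝ) / (k : ℝ))) ∧
    (∀ w : Fin n → ℕ, slen (gens n ∪ M) w ≤ ((n * g : ℕ) : ℕ∞)) ∧
    (∀ s : ℕ, n * g ≤ s → expansion (gens n ∪ M) s = ⊤) := by
  have hk0 : k ≠ 0 := by omega
  obtain rfl : M = powerMacros n k := by simp_rw [hM, powerMacros, ← Pi.single_apply]
  have hlen (w : Fin n → ℕ) : slen (gens n ∪ powerMacros n k) w ≤ ((n * g : ℕ) : ℕ∞) := by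
    exact_mod_cast slen_le_mul hWaring Set.subset_union_right w
  refine ⟨fun r _ => ⟨ncard_powerMacros_inter_ball hk0 r, ?_⟩, hlen,
    fun s hs => expansion_eq_top fun w => (hlen w).trans (by exact_mod_cast hs)⟩
  rw [ncard_powerMacros_inter_ball hk0 r]
  push_cast
  gcongr
  exact Nat.floor_le (by positivity)

/-- **Polynomial density gives infinite expansion (Waring macros).**
Fix `k ≥ 2` and let `g ≥ 1` have the Waring property for exponent `k`: every natural
number is a sum of at most `g` `k`-th powers of positive integers. For the macro set
`M = { m^k · a_i : 1 ≤ i ≤ n, m ≥ 1 }` we have `|M ∩ B_G(r)| = n⌊r^{1/k}⌋ ≤ n·r^{1/k}`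
for all `r ≥ 1`, every `w ∈ A_n` satisfies `|w|_{G'} ≤ n·g`, and consequently
`f_{G'}(s) = ∞` for all `s ≥ n·g`. -/
theorem waring_macros_infinite_expansion
    (n k g : ℕ) (hn : 1 ≤ n) (hk : 2 ≤ k) (hg : 1 ≤ g)
    (hWaring : ∀ x : ℕ, ∃ l : Multiset ℕ,
      (l.card ≤ g) ∧ (∀ m ∈ l, ∃ t : ℕ, 1 ≤ t ∧ m = t ^ k) ∧ l.sum = x)
    (M : Set (Fin n → ℕ))
    (hM : M = {w | ∃ i : Fin n, ∃ m : ℕ, 1 ≤ m ∧ w = fun t => if t = i then m ^ k else 0}) :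
    (∀ r : ℕ, 1 ≤ r →
      (M ∩ {w | glen w ≤ r}).ncard = n * ⌊(r : ℝ) ^ ((1 : ℝ) / (k : ℝ))⌋₊ ∧
      ((M ∩ {w | glen w ≤ r}).ncard : ℝ) ≤ (n : ℝ) * (r : ℝ) ^ ((1 : ℝ) / (k : ℝ))) ∧
    (∀ w : Fin n → ℕ, slen (gens n ∪ M) w ≤ ((n * g : ℕ) : ℕ∞)) ∧
    (∀ s : ℕ, n * g ≤ s → expansion (gens n ∪ M) s = ⊤) :=
  waring_macros_infinite_expansion_general n k g hk hWaring M hM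
end

section
/- Let n ≥ 2, let M ⊆ F_n contain at most c·ℓ^p macros of each G-length ℓ ≥ 2 (c > 0, p ≥ 0 constants), and let d ≥ 3 be an integer. Then for every integer s ≥ 1, the number of words of exact G-length d·s that admit a G'-representation using at most s generators satisfies |{ w ∈ S_{ds} : |w|_{G'} ≤ s }| ≤ (2e(n + c)d^{p+1})^s. -/
/-!
A word of length `d s` with `|w|_{G'} ≤ s` is, after padding with empty words, the concatenation
of an `s`-tuple of pieces from `G' ∪ {ε}` whose lengths `ℓ_i` form a weak composition of `d s`.
There are at most `C((d+1)s, s) ≤ (e(d+1))^s` such compositions, and for a fixed one at most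
`∏ (n + c) max(ℓ_i, 1)^p` tuples of pieces. Since `max(x, 1) ≤ d e^{x/d - 1}` once `d ≥ e`, and
`∑ ℓ_i = d s`, the product of the `max(ℓ_i, 1)` is at most `d^s`.
-/

open scoped ENNReal

/-- The single-letter generating set `G` of the free monoid `F_n` on `n` letters,
realized as lists over `Fin n`. -/
def letters (n : ℕ) : Set (List (Fin n)) := {w | ∃ i : Fin n, w = [i]}

/-- The length of `w ∈ F_n` with respect to a generating set `S`: the minimum number `k`
such that `w` is a concatenation of `k` elements of `S`; `⊤` if `w` is not representable. -/
noncomputable def flen {n : ℕ} (S : Set (List (Fin n))) (w : List (Fin n)) : ℕ∞ :=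
  sInf {k : ℕ∞ | ∃ L : List (List (Fin n)),
    (∀ x ∈ L, x ∈ S) ∧ L.flatten = w ∧ (L.length : ℕ∞) = k}

/-- The expansion function `f_{G'}(s) = sup { r ∈ ℕ : B_G(r) ⊆ B_{G'}(s) }` of the free
monoid, valued in `ℝ≥0∞` (so `⊤` means the inclusion holds for every radius). -/
noncomputable def fexpansion {n : ℕ} (S : Set (List (Fin n))) (s : ℕ) : ℝ≥0∞ :=
  sSup {x : ℝ≥0∞ | ∃ r : ℕ, x = (r : ℝ≥0∞) ∧
    ∀ w : List (Fin n), w.length ≤ r → flen S w ≤ (s : ℕ∞)}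

open Finset

theorem List.exists_ofFn_flatten_eq {α : Type*} (L : List (List α)) {s : ℕ} (h : L.length ≤ s) :
    ∃ F : Fin s → List α, (∀ i, F i ∈ L ∨ F i = []) ∧ (List.ofFn F).flatten = L.flatten := by
  induction s generalizing L with
  | zero => exact ⟨Fin.elim0, fun i => i.elim0, by simp_all⟩
  | succ s ih =>
    cases L with
    | nil => exact ⟨fun _ => [], fun _ => .inr rfl, by simp⟩
    | cons x L =>
      obtain ⟨F, hF, hflat⟩ := ih L (by simpa using h)
      refine ⟨Fin.cons x F, Fin.cases (by simp) fun i => ?_, by simp [hflat]⟩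
      simpa using (hF i).imp_left (List.mem_cons_of_mem x)

theorem Finset.card_piAntidiag_univ {ι : Type*} [Fintype ι] [DecidableEq ι] (N : ℕ) :
    #(piAntidiag (univ : Finset ι) N) = (Fintype.card ι + N - 1).choose N := by
  rw [card_eq_of_equiv_fintype ((Equiv.subtypeEquivRight fun f => by simp).trans
    (Sym.equivNatSumOfFintype ι N).symm), Sym.card_sym_eq_choose]

theorem Nat.choose_mul_le_exp_mul_pow (m s : ℕ) :
    ((m * s).choose s : ℝ) ≤ (Real.exp 1 * m) ^ s := by
  calc ((m * s).choose s : ℝ) ≤ ((m * s : ℕ) : ℝ) ^ s / s.factorial := Nat.choose_le_pow_div s _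
    _ = (m : ℝ) ^ s * ((s : ℝ) ^ s / s.factorial) := by push_cast; ring
    _ ≤ (m : ℝ) ^ s * Real.exp s := by gcongr; exact Real.pow_div_factorial_le_exp _ (by positivity) s
    _ = (Real.exp 1 * m) ^ s := by rw [mul_pow, ← Real.exp_nat_mul, mul_one, mul_comm]

theorem card_piAntidiag_fin_mul_le (d s : ℕ) :
    (#(piAntidiag (univ : Finset (Fin s)) (d * s)) : ℝ) ≤ (Real.exp 1 * (d + 1)) ^ s := by
  have hcard : #(piAntidiag (univ : Finset (Fin s)) (d * s)) ≤ ((d + 1) * s).choose s := by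
    rw [card_piAntidiag_univ, Fintype.card_fin, show (d + 1) * s = d * s + s by ring,
      ← Nat.choose_symm_add]
    exact Nat.choose_le_choose _ (by omega)
  calc _ ≤ ((((d + 1) * s).choose s : ℕ) : ℝ) := by exact_mod_cast hcard
    _ ≤ _ := by exact_mod_cast Nat.choose_mul_le_exp_mul_pow (d + 1) s

theorem Real.max_one_le_mul_exp {d x : ℝ} (hd : Real.exp 1 ≤ d) (hx : 0 ≤ x) :
    max x 1 ≤ d * Real.exp (x / d - 1) := by
  have hd0 : 0 < d := (Real.exp_pos 1).trans_le hd
  refine max_le ?_ ?_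
  · have := Real.add_one_le_exp (x / d - 1)
    calc x = d * (x / d - 1 + 1) := by field_simp; ring
      _ ≤ d * Real.exp (x / d - 1) := by gcongr
  · calc (1 : ℝ) = Real.exp 1 * Real.exp (-1) := by rw [← Real.exp_add]; simp
      _ ≤ d * Real.exp (x / d - 1) := by gcongr; linarith [div_nonneg hx hd0.le]

theorem Real.prod_max_one_le_pow {ι : Type*} [Fintype ι] {d : ℝ} (hd : Real.exp 1 ≤ d)
    {x : ι → ℝ} (hx : ∀ i, 0 ≤ x i) (hsum : ∑ i, x i ≤ d * Fintype.card ι) :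
    ∏ i, max (x i) 1 ≤ d ^ Fintype.card ι := by
  have hd0 : 0 < d := (Real.exp_pos 1).trans_le hd
  have hexp : Real.exp (∑ i, (x i / d - 1)) ≤ 1 := by
    rw [Real.exp_le_one_iff, Finset.sum_sub_distrib, ← Finset.sum_div, sub_nonpos,
      div_le_iff₀ hd0]
    simpa [mul_comm] using hsum
  calc ∏ i, max (x i) 1 ≤ ∏ i, d * Real.exp (x i / d - 1) :=
        prod_le_prod (fun i _ => by positivity) fun i _ => Real.max_one_le_mul_exp hd (hx i)
    _ = d ^ Fintype.card ι * Real.exp (∑ i, (x i / d - 1)) := by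
        rw [prod_mul_distrib, prod_const, card_univ, Real.exp_sum]
    _ ≤ d ^ Fintype.card ι := mul_le_of_le_one_right (by positivity) hexp

theorem exists_flatten_eq_of_flen_le {n : ℕ} {S : Set (List (Fin n))} {w : List (Fin n)} {s : ℕ}
    (h : flen S w ≤ s) :
    ∃ L : List (List (Fin n)), (∀ x ∈ L, x ∈ S) ∧ L.flatten = w ∧ L.length ≤ s := by
  have hne : {k : ℕ∞ | ∃ L : List (List (Fin n)),
      (∀ x ∈ L, x ∈ S) ∧ L.flatten = w ∧ (L.length : ℕ∞) = k}.Nonempty := by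
    by_contra hempty
    rw [Set.not_nonempty_iff_eq_empty] at hempty
    rw [flen, hempty, sInf_empty, top_le_iff] at h
    exact ENat.natCast_ne_top s h
  obtain ⟨L, hLS, hLw, hLk⟩ := csInf_mem hne
  exact ⟨L, hLS, hLw, by rw [flen, ← hLk] at h; exact_mod_cast h⟩

theorem exists_ofFn_flatten_eq_of_flen_le {n : ℕ} {S : Set (List (Fin n))} {w : List (Fin n)}
    {s : ℕ} (h : flen S w ≤ s) :
    ∃ F : Fin s → List (Fin n), (∀ i, F i ∈ insert [] S) ∧ (List.ofFn F).flatten = w := by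
  obtain ⟨L, hLS, rfl, hLs⟩ := exists_flatten_eq_of_flen_le h
  obtain ⟨F, hF, hflat⟩ := L.exists_ofFn_flatten_eq hLs
  exact ⟨F, fun i => (hF i).elim (fun hi => .inr (hLS _ hi)) .inl, hflat⟩

theorem ncard_flen_le_le_sum_prod {n : ℕ} (S : Set (List (Fin n))) (N s : ℕ) :
    {w : List (Fin n) | w.length = N ∧ flen S w ≤ s}.ncard ≤
      ∑ ℓ ∈ piAntidiag (univ : Finset (Fin s)) N,
        ∏ i, {x ∈ insert [] S | x.length = ℓ i}.ncard := by
  classical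
  have hfin (ℓ : ℕ) : {x ∈ insert [] S | x.length = ℓ}.Finite :=
    (List.finite_length_eq (Fin n) ℓ).subset fun x hx => hx.2
  set tuples := (piAntidiag (univ : Finset (Fin s)) N).biUnion
    fun ℓ => Fintype.piFinset fun i => (hfin (ℓ i)).toFinset
  have hsub : {w : List (Fin n) | w.length = N ∧ flen S w ≤ s} ⊆
      tuples.image fun F => (List.ofFn F).flatten := by
    rintro w ⟨rfl, hw⟩
    obtain ⟨F, hF, rfl⟩ := exists_ofFn_flatten_eq_of_flen_le hw
    refine mem_image.2 ⟨F, mem_biUnion.2 ⟨fun i => (F i).length, ?_, ?_⟩, rfl⟩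
    · simp [List.length_flatten, List.map_ofFn, List.sum_ofFn]
    · simpa using hF
  calc _ ≤ #(tuples.image fun F => (List.ofFn F).flatten) := by
        simpa only [Set.ncard_coe_finset] using Set.ncard_le_ncard hsub
    _ ≤ #tuples := card_image_le
    _ ≤ _ := card_biUnion_le.trans_eq <| sum_congr rfl fun ℓ _ => by
        rw [Fintype.card_piFinset]
        exact prod_congr rfl fun i _ => (Set.ncard_eq_toFinset_card _ (hfin _)).symm

theorem ncard_insert_nil_letters_union_le {n : ℕ} (hn : 1 ≤ n) {c p : ℝ} (hc : 0 ≤ c)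
    {M : Set (List (Fin n))}
    (hM : ∀ ℓ : ℕ, 2 ≤ ℓ → (({m ∈ M | m.length = ℓ}).ncard : ℝ) ≤ c * (ℓ : ℝ) ^ p) (ℓ : ℕ) :
    ({x ∈ insert [] (letters n ∪ M) | x.length = ℓ}.ncard : ℝ) ≤ (n + c) * max (ℓ : ℝ) 1 ^ p := by
  have hn' : (1 : ℝ) ≤ n := by exact_mod_cast hn
  rcases Nat.lt_or_ge ℓ 2 with hℓ | hℓ
  · have hcard : {x ∈ insert [] (letters n ∪ M) | x.length = ℓ}.ncard ≤ n := by
      interval_cases ℓ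
      · calc _ ≤ ({[]} : Set (List (Fin n))).ncard :=
              Set.ncard_le_ncard fun x hx => List.length_eq_zero_iff.1 hx.2
          _ ≤ n := by simpa using hn
      · calc _ ≤ (Set.range fun i : Fin n => [i]).ncard :=
              Set.ncard_le_ncard fun x hx => by
                obtain ⟨i, rfl⟩ := List.length_eq_one_iff.1 hx.2
                exact ⟨i, rfl⟩
          _ = n := by
              rw [Set.ncard_range_of_injective fun i j h => List.singleton_inj.1 h, Nat.card_fin]
    have hmax : max (ℓ : ℝ) 1 = 1 := max_eq_right (by exact_mod_cast Nat.le_of_lt_succ hℓ)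
    rw [hmax, Real.one_rpow, mul_one]
    exact (Nat.cast_le.2 hcard).trans (le_add_of_nonneg_right hc)
  · have hsub : {x ∈ insert [] (letters n ∪ M) | x.length = ℓ} ⊆ {m ∈ M | m.length = ℓ} := by
      rintro x ⟨(rfl | ⟨i, rfl⟩ | hxM), hx⟩
      · simp at hx; omega
      · simp at hx; omega
      · exact ⟨hxM, hx⟩
    have hfin : {m ∈ M | m.length = ℓ}.Finite :=
      (List.finite_length_eq (Fin n) ℓ).subset fun x hx => hx.2
    have hmax : max (ℓ : ℝ) 1 = ℓ := max_eq_left (by exact_mod_cast (by omega : 1 ≤ ℓ))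
    rw [hmax]
    calc _ ≤ (({m ∈ M | m.length = ℓ}).ncard : ℝ) := by exact_mod_cast Set.ncard_le_ncard hsub hfin
      _ ≤ c * (ℓ : ℝ) ^ p := hM ℓ hℓ
      _ ≤ (n + c) * (ℓ : ℝ) ^ p := by gcongr; linarith

theorem prod_ncard_insert_nil_letters_union_le {n : ℕ} (hn : 1 ≤ n) {c p : ℝ} (hc : 0 ≤ c)
    (hp : 0 ≤ p) {M : Set (List (Fin n))}
    (hM : ∀ ℓ : ℕ, 2 ≤ ℓ → (({m ∈ M | m.length = ℓ}).ncard : ℝ) ≤ c * (ℓ : ℝ) ^ p)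
    {d : ℝ} (hd : Real.exp 1 ≤ d) {s : ℕ} {ℓ : Fin s → ℕ} (hℓ : ∑ i, (ℓ i : ℝ) ≤ d * s) :
    ∏ i, ({x ∈ insert [] (letters n ∪ M) | x.length = ℓ i}.ncard : ℝ) ≤ ((n + c) * d ^ p) ^ s := by
  have hd0 : 0 ≤ d := (Real.exp_pos 1).le.trans hd
  have hprod : ∏ i, max (ℓ i : ℝ) 1 ≤ d ^ s := by
    simpa using Real.prod_max_one_le_pow hd (fun i => Nat.cast_nonneg (ℓ i)) (by simpa using hℓ)
  calc _ ≤ ∏ i, ((n + c) * max (ℓ i : ℝ) 1 ^ p) :=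
        prod_le_prod (fun i _ => by positivity)
          fun i _ => ncard_insert_nil_letters_union_le hn hc hM (ℓ i)
    _ = (n + c) ^ s * (∏ i, max (ℓ i : ℝ) 1) ^ p := by
        rw [prod_mul_distrib, prod_const, card_univ, Fintype.card_fin,
          Real.finsetProd_rpow _ _ fun i _ => by positivity]
    _ ≤ (n + c) ^ s * (d ^ s) ^ p := by gcongr
    _ = ((n + c) * d ^ p) ^ s := by
        rw [mul_pow, ← Real.rpow_natCast_mul hd0,
          ← Real.rpow_mul_natCast hd0, mul_comm (s : ℝ) p]

theorem free_counting_compressible_words_general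
    (n : ℕ) (hn : 2 ≤ n) (c p : ℝ) (hc : 0 < c) (hp : 0 ≤ p)
    (M : Set (List (Fin n)))
    (hM : ∀ ℓ : ℕ, 2 ≤ ℓ → (({m ∈ M | m.length = ℓ}).ncard : ℝ) ≤ c * (ℓ : ℝ) ^ p)
    (d : ℕ) (hd : 3 ≤ d) (s : ℕ) :
    (({w : List (Fin n) | w.length = d * s ∧
        flen (letters n ∪ M) w ≤ (s : ℕ∞)}).ncard : ℝ)
      ≤ (2 * Real.exp 1 * ((n : ℝ) + c) * (d : ℝ) ^ (p + 1)) ^ s := by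
  have hd' : Real.exp 1 ≤ d :=
    (Real.exp_one_lt_d9.le.trans (by norm_num)).trans (show (3 : ℝ) ≤ d by exact_mod_cast hd)
  have hterm (ℓ) (hℓ : ℓ ∈ piAntidiag (univ : Finset (Fin s)) (d * s)) :
      ∏ i, ({x ∈ insert [] (letters n ∪ M) | x.length = ℓ i}.ncard : ℝ) ≤ ((n + c) * d ^ p) ^ s :=
    prod_ncard_insert_nil_letters_union_le (by omega) hc.le hp hM hd' <| by
      exact_mod_cast (mem_piAntidiag.1 hℓ).1.le
  calc _ ≤ ∑ ℓ ∈ piAntidiag (univ : Finset (Fin s)) (d * s),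
          ∏ i, ({x ∈ insert [] (letters n ∪ M) | x.length = ℓ i}.ncard : ℝ) := by
        exact_mod_cast ncard_flen_le_le_sum_prod (letters n ∪ M) (d * s) s
    _ ≤ #(piAntidiag (univ : Finset (Fin s)) (d * s)) * ((n + c) * d ^ p) ^ s := by
        simpa using sum_le_sum hterm
    _ ≤ (Real.exp 1 * (d + 1)) ^ s * ((n + c) * d ^ p) ^ s := by
        gcongr; exact card_piAntidiag_fin_mul_le d s
    _ ≤ _ := by
        rw [← mul_pow, Real.rpow_add_one (by positivity)]
        gcongr ?_ ^ s
        calc Real.exp 1 * (d + 1) * ((n + c) * d ^ p)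
            ≤ Real.exp 1 * (2 * d) * ((n + c) * d ^ p) := by
              gcongr; linarith [show (1 : ℝ) ≤ d by exact_mod_cast (by omega : 1 ≤ d)]
          _ = _ := by ring

/-- **Counting compressible words in the free monoid.**
Let `n ≥ 2`, let `M ⊆ F_n` contain at most `c·ℓ^p` macros of each `G`-length `ℓ ≥ 2`
(`c > 0`, `p ≥ 0`), and let `d ≥ 3`. Then for every `s ≥ 1`, the number of words of exact
length `d·s` admitting a `G'`-representation with at most `s` generators is at most
`(2e(n + c)d^{p+1})^s`. -/
theorem free_counting_compressible_words
    (n : ℕ) (hn : 2 ≤ n) (c p : ℝ) (hc : 0 < c) (hp : 0 ≤ p)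
    (M : Set (List (Fin n)))
    (hM : ∀ ℓ : ℕ, 2 ≤ ℓ → (({m ∈ M | m.length = ℓ}).ncard : ℝ) ≤ c * (ℓ : ℝ) ^ p)
    (d : ℕ) (hd : 3 ≤ d) (s : ℕ) (hs : 1 ≤ s) :
    (({w : List (Fin n) | w.length = d * s ∧
        flen (letters n ∪ M) w ≤ (s : ℕ∞)}).ncard : ℝ)
      ≤ (2 * Real.exp 1 * ((n : ℝ) + c) * (d : ℝ) ^ (p + 1)) ^ s :=
  free_counting_compressible_words_general n hn c p hc hp M hM d hd s
end
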